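/- arXiv:1611.04902 — 5 statements merged into one kernel-verified Lean document; each statement's English description precedes it below -/
import Mathlib

section
/- (Discrete Trudinger–Moser bound) For any α ≥ 0 and β ∈ ℝ there exist constants C₁, C₂ depending only on G, p, α, β such that for all φ : V → ℝ with Σ_{i∼j} ω_{ij}|φ_j - φ_i|^p ≤ 1 and Σ_i μ_i φ_i = 0, one has ‖φ‖_∞ ≤ C₁ and Σ_{i ∈ V} μ_i e^{β |φ_i|^α} ≤ C₂. -/
/-!
The energy bound controls every edge: `ω_ab |φ_b - φ_a|^p ≤ 2`. Summing these along paths of the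
connected graph bounds the oscillation `|φ_j - φ_i|` uniformly, and a function of zero mean takes
both a nonpositive and a nonnegative value, so `‖φ‖_∞` is bounded by the oscillation bound. The
exponential sum is then bounded termwise.
-/

open Finset Real

/-- The discrete `p`-Laplacian on a weighted graph with adjacency `A`,
edge weights `ω` and vertex measure `μ`:
`(Δ_p f)_i = (1/μ_i) Σ_{j ∼ i} ω_{ij} |f_j - f_i|^{p-2} (f_j - f_i)`. -/
noncomputable def pLap {V : Type*} [Fintype V] (p : ℝ) (A : V → V → Prop) [DecidableRel A]
    (ω : V → V → ℝ) (μ : V → ℝ) (f : V → ℝ) : V → ℝ :=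
  fun i => (1 / μ i) * ∑ j, if A i j then ω i j * |f j - f i| ^ (p - 2) * (f j - f i) else 0

/-- Sum of a symmetric function `g` over the (unordered) edges of the graph:
`Σ_{i∼j} g_{ij} = (1/2) Σ_i Σ_{j : A i j} g i j`. -/
noncomputable def edgeSum {V : Type*} [Fintype V] (A : V → V → Prop) [DecidableRel A]
    (g : V → V → ℝ) : ℝ :=
  (1 / 2) * ∑ i, ∑ j, if A i j then g i j else 0

section Oscillation

variable {V : Type*}

theorem single_le_two_mul_edgeSum [Fintype V] {A : V → V → Prop} [DecidableRel A]
    {g : V → V → ℝ} (hg : ∀ i j, A i j → 0 ≤ g i j) {a b : V} (hab : A a b) :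
    g a b ≤ 2 * edgeSum A g := by
  have hnn : ∀ i j, 0 ≤ if A i j then g i j else 0 := fun i j => by
    split_ifs with h
    exacts [hg i j h, le_rfl]
  calc g a b = if A a b then g a b else 0 := (if_pos hab).symm
    _ ≤ ∑ j, if A a j then g a j else 0 := single_le_sum (fun j _ => hnn a j) (mem_univ b)
    _ ≤ ∑ i, ∑ j, if A i j then g i j else 0 :=
      single_le_sum (f := fun i => ∑ j, if A i j then g i j else 0)
        (fun i _ => sum_nonneg fun j _ => hnn i j) (mem_univ a)
    _ = 2 * edgeSum A g := by simp only [edgeSum]; ring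

theorem abs_sub_le_of_edgeSum_rpow_le_one [Fintype V] {p : ℝ} (hp : 0 < p)
    {A : V → V → Prop} [DecidableRel A] {ω : V → V → ℝ} (hω : ∀ i j, A i j → 0 < ω i j)
    {φ : V → ℝ} (hφ : edgeSum A (fun i j => ω i j * |φ j - φ i| ^ p) ≤ 1)
    {a b : V} (hab : A a b) :
    |φ b - φ a| ≤ (2 / ω a b) ^ p⁻¹ := by
  have hωab := hω a b hab
  have hedge : ω a b * |φ b - φ a| ^ p ≤ 2 * edgeSum A (fun i j => ω i j * |φ j - φ i| ^ p) :=
    single_le_two_mul_edgeSum (g := fun i j => ω i j * |φ j - φ i| ^ p)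
      (fun i j h => mul_nonneg (hω i j h).le (rpow_nonneg (abs_nonneg _) p)) hab
  rw [le_rpow_inv_iff_of_pos (abs_nonneg _) (by positivity) hp, le_div_iff₀ hωab, mul_comm]
  linarith

theorem Relation.ReflTransGen.exists_abs_sub_le {A : V → V → Prop} (K : V → V → ℝ) {i j : V}
    (h : Relation.ReflTransGen A i j) :
    ∃ c, ∀ φ : V → ℝ, (∀ a b, A a b → |φ b - φ a| ≤ K a b) → |φ j - φ i| ≤ c := by
  induction h with
  | refl => exact ⟨0, fun φ _ => by simp⟩
  | @tail b d _ hbd ih =>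
    obtain ⟨c, hc⟩ := ih
    refine ⟨c + K b d, fun φ hK => ?_⟩
    calc |φ d - φ i| ≤ |φ d - φ b| + |φ b - φ i| := abs_sub_le _ _ _
      _ ≤ c + K b d := by linarith [hc φ hK, hK b d hbd]

theorem exists_forall_abs_sub_le_of_connected [Finite V] {A : V → V → Prop} (K : V → V → ℝ)
    (hconn : ∀ i j, Relation.ReflTransGen A i j) :
    ∃ C, ∀ φ : V → ℝ, (∀ a b, A a b → |φ b - φ a| ≤ K a b) → ∀ i j, |φ j - φ i| ≤ C := by
  choose c hc using fun i j => (hconn i j).exists_abs_sub_le K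
  obtain ⟨C, hC⟩ := Finite.exists_le fun ij : V × V => c ij.1 ij.2
  exact ⟨C, fun φ hK i j => (hc i j φ hK).trans (hC (i, j))⟩

end Oscillation

section ZeroMean

variable {V : Type*} [Fintype V] {μ φ : V → ℝ}

theorem exists_nonpos_of_sum_mul_eq_zero [Nonempty V] (hμ : ∀ i, 0 < μ i)
    (hmean : ∑ i, μ i * φ i = 0) : ∃ j, φ j ≤ 0 := by
  obtain ⟨j, -, hj⟩ := exists_le_of_sum_le (f := fun i => μ i * φ i)
    (g := fun _ => 0) univ_nonempty (by simp [hmean])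
  exact ⟨j, nonpos_of_mul_nonpos_right hj (hμ j)⟩

theorem abs_le_of_sum_mul_eq_zero (hμ : ∀ i, 0 < μ i) (hmean : ∑ i, μ i * φ i = 0)
    {C : ℝ} (hosc : ∀ i j, |φ j - φ i| ≤ C) (i : V) : |φ i| ≤ C := by
  have : Nonempty V := ⟨i⟩
  obtain ⟨jm, hjm⟩ := exists_nonpos_of_sum_mul_eq_zero hμ hmean
  obtain ⟨jp, hjp⟩ := exists_nonpos_of_sum_mul_eq_zero (φ := -φ) hμ
    (by simp [mul_neg, sum_neg_distrib, hmean])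
  have h₁ := (abs_le.mp (hosc jm i)).2
  have h₂ := (abs_le.mp (hosc i jp)).2
  simp only [Pi.neg_apply, neg_nonpos] at hjp
  exact abs_le.mpr ⟨by linarith, by linarith⟩

end ZeroMean

theorem sum_mul_exp_mul_abs_rpow_le {V : Type*} [Fintype V] {μ φ : V → ℝ} (hμ : ∀ i, 0 ≤ μ i)
    {α : ℝ} (hα : 0 ≤ α) (β : ℝ) {C : ℝ} (hφ : ∀ i, |φ i| ≤ C) :
    ∑ i, μ i * exp (β * |φ i| ^ α) ≤ (∑ i, μ i) * exp (|β| * C ^ α) := by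
  rw [sum_mul]
  refine sum_le_sum fun i _ => mul_le_mul_of_nonneg_left (exp_le_exp.mpr ?_) (hμ i)
  calc β * |φ i| ^ α ≤ |β| * |φ i| ^ α :=
        mul_le_mul_of_nonneg_right (le_abs_self β) (rpow_nonneg (abs_nonneg _) α)
    _ ≤ |β| * C ^ α :=
        mul_le_mul_of_nonneg_left (rpow_le_rpow (abs_nonneg _) (hφ i) hα) (abs_nonneg β)

theorem stmt5_general {V : Type*} [Fintype V] (p : ℝ) (hp : 1 < p)
    (A : V → V → Prop) [DecidableRel A]
    (ω : V → V → ℝ) (hωpos : ∀ i j, A i j → 0 < ω i j)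
    (μ : V → ℝ) (hμ : ∀ i, 0 < μ i)
    (hconn : ∀ i j : V, Relation.ReflTransGen A i j) (α β : ℝ) (hα : 0 ≤ α) :
    ∃ C₁ C₂ : ℝ, ∀ φ : V → ℝ,
      edgeSum A (fun i j => ω i j * |φ j - φ i| ^ p) ≤ 1 →
      ∑ i, μ i * φ i = 0 →
      (∀ i, |φ i| ≤ C₁) ∧ ∑ i, μ i * Real.exp (β * |φ i| ^ α) ≤ C₂ := by
  obtain ⟨C, hC⟩ := exists_forall_abs_sub_le_of_connected (fun a b => (2 / ω a b) ^ p⁻¹) hconn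
  refine ⟨C, (∑ i, μ i) * exp (|β| * C ^ α), fun φ hφ hmean => ?_⟩
  have hosc := hC φ fun a b hab =>
    abs_sub_le_of_edgeSum_rpow_le_one (zero_lt_one.trans hp) hωpos hφ hab
  have hsup := abs_le_of_sum_mul_eq_zero hμ hmean hosc
  exact ⟨hsup, sum_mul_exp_mul_abs_rpow_le (fun i => (hμ i).le) hα β hsup⟩

/-- discrete Trudinger–Moser type bounds. -/
theorem stmt5 {V : Type*} [Fintype V] [Nonempty V] (p : ℝ) (hp : 1 < p)
    (A : V → V → Prop) [DecidableRel A] (hA : Symmetric A)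
    (ω : V → V → ℝ) (hωsymm : ∀ i j, ω i j = ω j i) (hωpos : ∀ i j, A i j → 0 < ω i j)
    (μ : V → ℝ) (hμ : ∀ i, 0 < μ i)
    (hconn : ∀ i j : V, Relation.ReflTransGen A i j) (α β : ℝ) (hα : 0 ≤ α) :
    ∃ C₁ C₂ : ℝ, ∀ φ : V → ℝ,
      edgeSum A (fun i j => ω i j * |φ j - φ i| ^ p) ≤ 1 →
      ∑ i, μ i * φ i = 0 →
      (∀ i, |φ i| ≤ C₁) ∧ ∑ i, μ i * Real.exp (β * |φ i| ^ α) ≤ C₂ :=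
  stmt5_general p hp A ω hωpos μ hμ hconn α β hα
end

section
/- The operator L = Δ_p - k is injective: if (Δ_p - k) f = (Δ_p - k) g on V, then f = g. -/
open Finset Real

/-! The map `t ↦ |t|^(p-2) t` is increasing, so at a vertex where `f - g` is maximal every edge
term of `Δ_p f` is at most the corresponding term of `Δ_p g`. Hence `Δ_p f ≤ Δ_p g` there, and if
`Δ_p f - k f ≥ Δ_p g - k g` this forces `k (f - g) ≤ 0` at that vertex, i.e. `f ≤ g` everywhere
(comparison principle). Applied in both directions, `L f = L g` gives `f = g`. -/

lemma abs_rpow_sub_two_mul_self_of_nonneg {p t : ℝ} (hp : 1 < p) (ht : 0 ≤ t) :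
    |t| ^ (p - 2) * t = t ^ (p - 1) := by
  rcases ht.eq_or_lt with rfl | ht
  · simp [Real.zero_rpow (by linarith : p - 1 ≠ 0)]
  · rw [abs_of_pos ht, show p - 1 = p - 2 + 1 by ring, Real.rpow_add ht, Real.rpow_one]

lemma monotone_abs_rpow_sub_two_mul_self {p : ℝ} (hp : 1 < p) :
    Monotone fun t : ℝ => |t| ^ (p - 2) * t := by
  refine monotone_of_odd_of_monotoneOn_nonneg (fun t => by simp only [abs_neg, mul_neg]) ?_
  intro s hs t ht hst
  simp only [abs_rpow_sub_two_mul_self_of_nonneg hp hs, abs_rpow_sub_two_mul_self_of_nonneg hp ht]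
  exact Real.rpow_le_rpow hs hst (by linarith)

lemma pLap_le_pLap_of_forall_sub_le {V : Type*} [Fintype V] {p : ℝ} (hp : 1 < p)
    {A : V → V → Prop} [DecidableRel A] {ω : V → V → ℝ} (hω : ∀ i j, A i j → 0 ≤ ω i j)
    {μ : V → ℝ} {f g : V → ℝ} {i : V} (hμ : 0 < μ i) (hmax : ∀ j, f j - g j ≤ f i - g i) :
    pLap p A ω μ f i ≤ pLap p A ω μ g i := by
  refine mul_le_mul_of_nonneg_left (sum_le_sum fun j _ => ?_) (by positivity)
  split_ifs with hij
  · simp only [mul_assoc]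
    refine mul_le_mul_of_nonneg_left (monotone_abs_rpow_sub_two_mul_self hp ?_) (hω i j hij)
    linarith [hmax j]
  · rfl

theorem le_of_pLap_sub_mul_le {V : Type*} [Fintype V] {p : ℝ} (hp : 1 < p)
    {A : V → V → Prop} [DecidableRel A] {ω : V → V → ℝ} (hω : ∀ i j, A i j → 0 ≤ ω i j)
    {μ : V → ℝ} (hμ : ∀ i, 0 < μ i) {k : V → ℝ} (hk : ∀ i, 0 < k i) {f g : V → ℝ}
    (hfg : ∀ i, pLap p A ω μ g i - k i * g i ≤ pLap p A ω μ f i - k i * f i) :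
    f ≤ g := by
  intro i
  obtain ⟨m, -, hm⟩ := exists_max_image univ (fun j => f j - g j) ⟨i, mem_univ i⟩
  have hmax : ∀ j, f j - g j ≤ f m - g m := fun j => hm j (mem_univ j)
  have hLap := pLap_le_pLap_of_forall_sub_le hp hω (hμ m) hmax
  have hm_nonpos : k m * (f m - g m) ≤ 0 := by linarith [hfg m]
  have := nonpos_of_mul_nonpos_right hm_nonpos (hk m)
  linarith [hmax i]

theorem stmt7_general {V : Type*} [Fintype V] (p : ℝ) (hp : 1 < p)
    (A : V → V → Prop) [DecidableRel A]
    (ω : V → V → ℝ) (hωpos : ∀ i j, A i j → 0 < ω i j)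
    (μ : V → ℝ) (hμ : ∀ i, 0 < μ i)
    (k : V → ℝ) (hk : ∀ i, 0 < k i) (f g : V → ℝ)
    (hfg : ∀ i, pLap p A ω μ f i - k i * f i = pLap p A ω μ g i - k i * g i) :
    f = g := by
  have hω : ∀ i j, A i j → 0 ≤ ω i j := fun i j hij => (hωpos i j hij).le
  exact le_antisymm (le_of_pLap_sub_mul_le hp hω hμ hk fun i => (hfg i).ge)
    (le_of_pLap_sub_mul_le hp hω hμ hk fun i => (hfg i).le)

/-- `L = Δ_p - k` is injective when `k > 0`. -/
theorem stmt7 {V : Type*} [Fintype V] [Nonempty V] (p : ℝ) (hp : 1 < p)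
    (A : V → V → Prop) [DecidableRel A] (hA : Symmetric A)
    (ω : V → V → ℝ) (hωsymm : ∀ i j, ω i j = ω j i) (hωpos : ∀ i j, A i j → 0 < ω i j)
    (μ : V → ℝ) (hμ : ∀ i, 0 < μ i)
    (hconn : ∀ i j : V, Relation.ReflTransGen A i j) (k : V → ℝ) (hk : ∀ i, 0 < k i) (f g : V → ℝ)
    (hfg : ∀ i, pLap p A ω μ f i - k i * f i = pLap p A ω μ g i - k i * g i) :
    f = g :=
  stmt7_general p hp A ω hωpos μ hμ k hk f g hfg
end

section
/- The operator L = Δ_p - k is surjective: for any f : V → ℝ there exists u : V → ℝ with Δ_p u - k u = f. -/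
/-!
The equation `Δ_p u - k u = f` is the Euler–Lagrange equation of the energy
`J u = (1 / (2p)) Σ_{a ∼ b} ω_{ab} |u_b - u_a|^p + Σ_a μ_a (k_a u_a² / 2 + f_a u_a)`.
Since `k > 0`, the potential part is a sum of coercive quadratics in the separate coordinates, and
the gradient part is nonnegative, so `J` is coercive and attains a global minimum. By the discrete
Green formula (the flux `ω_{ab} |u_b - u_a|^{p-2} (u_b - u_a)` is antisymmetric), the derivative of
`J` at `u` in the direction `d` is `Σ_a μ_a d_a (k_a u_a + f_a - Δ_p u(a))`, which vanishes at the
minimiser for every `d`.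
-/

open Finset Real

open Filter

theorem Filter.tendsto_sum_apply_cocompact_atTop {ι : Type*} [Fintype ι] {X : ι → Type*}
    [∀ i, TopologicalSpace (X i)] {φ : ∀ i, X i → ℝ}
    (hφ : ∀ i, Tendsto (φ i) (cocompact (X i)) atTop) (hbdd : ∀ i, BddBelow (Set.range (φ i))) :
    Tendsto (fun x : ∀ i, X i => ∑ i, φ i (x i)) (cocompact (∀ i, X i)) atTop := by
  choose C hC using hbdd
  rw [← coprodᵢ_cocompact, Filter.coprodᵢ, tendsto_iSup]
  intro i
  refine tendsto_atTop_mono (fun x => ?_)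
    (tendsto_atTop_add_const_right _ (∑ j, C j - C i) ((hφ i).comp tendsto_comap))
  have hle : φ i (x i) - C i ≤ ∑ j, (φ j (x j) - C j) :=
    single_le_sum (f := fun j => φ j (x j) - C j) (fun j _ => sub_nonneg.2 (hC j ⟨x j, rfl⟩))
      (mem_univ i)
  rw [sum_sub_distrib] at hle
  simp only [Function.comp_apply]
  linarith

theorem Real.half_mul_sq_sub_le_quadratic {a : ℝ} (ha : 0 < a) (b t : ℝ) :
    a / 2 * t ^ 2 - b ^ 2 / (2 * a) ≤ a * t ^ 2 + b * t := by
  have hsq : (a * t + b) ^ 2 / (2 * a) = a / 2 * t ^ 2 + b * t + b ^ 2 / (2 * a) := by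
    field_simp
    ring
  have : 0 ≤ (a * t + b) ^ 2 / (2 * a) := by positivity
  linarith

theorem Real.tendsto_quadratic_cocompact_atTop {a : ℝ} (ha : 0 < a) (b : ℝ) :
    Tendsto (fun t : ℝ => a * t ^ 2 + b * t) (cocompact ℝ) atTop := by
  have hsq : Tendsto (fun t : ℝ => a / 2 * ‖t‖ ^ 2 - b ^ 2 / (2 * a)) (cocompact ℝ) atTop :=
    tendsto_atTop_add_const_right _ _ <| (Tendsto.const_mul_atTop (by positivity)
      ((tendsto_pow_atTop two_ne_zero).comp tendsto_norm_cocompact_atTop))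
  refine tendsto_atTop_mono (fun t => ?_) hsq
  simpa only [Real.norm_eq_abs, sq_abs] using Real.half_mul_sq_sub_le_quadratic ha b t

theorem Real.bddBelow_range_quadratic {a : ℝ} (ha : 0 < a) (b : ℝ) :
    BddBelow (Set.range fun t : ℝ => a * t ^ 2 + b * t) := by
  refine ⟨-(b ^ 2 / (2 * a)), ?_⟩
  rintro _ ⟨t, rfl⟩
  have := Real.half_mul_sq_sub_le_quadratic ha b t
  have : 0 ≤ a / 2 * t ^ 2 := by positivity
  linarith

section Graph

variable {V : Type*} [Fintype V]

theorem Finset.sum_sum_mul_sub_of_antisymm {R : Type*} [CommRing R] {G : V → V → R}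
    (hG : ∀ a b, G b a = -G a b) (d : V → R) : ∑ a, ∑ b, G a b * (d b - d a) = -2 * ∑ a, d a * ∑ b, G a b := by
  have hin : ∑ a, ∑ b, G a b * d b = -∑ a, d a * ∑ b, G a b := by
    rw [sum_comm, ← sum_neg_distrib]
    refine sum_congr rfl fun a _ => ?_
    rw [mul_sum, ← sum_neg_distrib]
    refine sum_congr rfl fun b _ => ?_
    rw [hG]
    ring
  have hout : ∑ a, ∑ b, G a b * d a = ∑ a, d a * ∑ b, G a b := by
    simp only [mul_sum, mul_comm]
  simp only [mul_sub, sum_sub_distrib, hin, hout]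
  ring

variable {A : V → V → Prop} [DecidableRel A]

theorem edgeSum_nonneg {g : V → V → ℝ} (hg : ∀ a b, A a b → 0 ≤ g a b) : 0 ≤ edgeSum A g := by
  unfold edgeSum
  refine mul_nonneg (by norm_num) (sum_nonneg fun a _ => sum_nonneg fun b _ => ?_)
  split_ifs with h
  exacts [hg a b h, le_rfl]

theorem Continuous.edgeSum {X : Type*} [TopologicalSpace X] {g : X → V → V → ℝ}
    (hg : ∀ a b, A a b → Continuous fun x => g x a b) : Continuous fun x => edgeSum A (g x) := by
  unfold _root_.edgeSum
  refine continuous_const.mul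
    (continuous_finsetSum _ fun a _ => continuous_finsetSum _ fun b _ => ?_)
  by_cases h : A a b
  · simpa only [if_pos h] using hg a b h
  · simpa only [if_neg h] using continuous_const

theorem HasDerivAt.edgeSum {g : ℝ → V → V → ℝ} {g' : V → V → ℝ} {x : ℝ}
    (hg : ∀ a b, A a b → HasDerivAt (fun t => g t a b) (g' a b) x) :
    HasDerivAt (fun t => edgeSum A (g t)) (edgeSum A g') x := by
  unfold _root_.edgeSum
  refine .const_mul _ (.fun_sum fun a _ => .fun_sum fun b _ => ?_)
  by_cases h : A a b
  · simpa only [if_pos h] using hg a b h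
  · simpa only [if_neg h] using hasDerivAt_const x (0 : ℝ)

theorem mul_pLap (p : ℝ) (ω : V → V → ℝ) {μ : V → ℝ} (u : V → ℝ) {i : V} (hμ : μ i ≠ 0) :
    μ i * pLap p A ω μ u i
      = ∑ j, if A i j then ω i j * |u j - u i| ^ (p - 2) * (u j - u i) else 0 := by
  unfold pLap
  field_simp

end Graph

theorem hasDerivAt_add_mul (x c s : ℝ) : HasDerivAt (fun t : ℝ => x + t * c) c s := by
  simpa using ((hasDerivAt_id s).mul_const c).const_add x

theorem hasDerivAt_abs_add_mul_rpow {p : ℝ} (hp : 1 < p) (x c : ℝ) :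
    HasDerivAt (fun t : ℝ => |x + t * c| ^ p) (p * |x| ^ (p - 2) * x * c) 0 := by
  simpa [Function.comp_def] using
    (hasDerivAt_abs_rpow (x + 0 * c) hp).comp 0 (hasDerivAt_add_mul x c 0)

section Energy

variable {V : Type*} [Fintype V] (p : ℝ) (A : V → V → Prop) [DecidableRel A]
  (ω : V → V → ℝ) (μ k f : V → ℝ)

noncomputable def pEnergy (u : V → ℝ) : ℝ :=
  edgeSum A (fun a b => ω a b * |u b - u a| ^ p) / p
    + ∑ a, (μ a * k a / 2 * u a ^ 2 + μ a * f a * u a)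

variable {p A ω μ k f}

theorem continuous_pEnergy (hp : 0 < p) : Continuous (pEnergy p A ω μ k f) := by
  unfold pEnergy
  refine .add (.div_const (.edgeSum fun a b _ => ?_) p) (by fun_prop)
  exact continuous_const.mul (((continuous_apply b).sub (continuous_apply a)).abs.rpow_const
    fun _ => Or.inr hp.le)

theorem tendsto_pEnergy_cocompact_atTop (hp : 0 < p) (hω : ∀ a b, A a b → 0 ≤ ω a b)
    (hμ : ∀ a, 0 < μ a) (hk : ∀ a, 0 < k a) :
    Tendsto (pEnergy p A ω μ k f) (cocompact (V → ℝ)) atTop := by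
  have hquad (a : V) : 0 < μ a * k a / 2 := half_pos (mul_pos (hμ a) (hk a))
  refine tendsto_atTop_mono (fun u => ?_) (tendsto_sum_apply_cocompact_atTop
    (fun a => Real.tendsto_quadratic_cocompact_atTop (hquad a) (μ a * f a))
    (fun a => Real.bddBelow_range_quadratic (hquad a) (μ a * f a)))
  have : 0 ≤ edgeSum A (fun a b => ω a b * |u b - u a| ^ p) / p :=
    div_nonneg (edgeSum_nonneg fun a b h => mul_nonneg (hω a b h) (by positivity)) hp.le
  simp only [pEnergy]
  linarith

theorem hasDerivAt_pEnergy_add_smul (hp : 1 < p) (hA : Symmetric A)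
    (hω : ∀ a b, ω a b = ω b a) (hμ : ∀ a, μ a ≠ 0) (u d : V → ℝ) :
    HasDerivAt (fun t : ℝ => pEnergy p A ω μ k f (u + t • d))
      (∑ a, μ a * d a * (k a * u a + f a - pLap p A ω μ u a)) 0 := by
  set G : V → V → ℝ := fun a b => if A a b then ω a b * |u b - u a| ^ (p - 2) * (u b - u a) else 0
  have hG (a b : V) : G b a = -G a b := by
    by_cases h : A a b
    · simp only [G, if_pos h, if_pos (hA h), hω b a, abs_sub_comm (u a)]
      ring
    · have h' : ¬A b a := fun h' => h (hA h')
      simp [G, h, h']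
  have hedge : HasDerivAt
      (fun t : ℝ => edgeSum A (fun a b => ω a b * |(u + t • d) b - (u + t • d) a| ^ p))
      (edgeSum A fun a b => ω a b * (p * |u b - u a| ^ (p - 2) * (u b - u a) * (d b - d a))) 0 :=
    .edgeSum fun a b _ => by
      have hline : (fun t : ℝ => ω a b * |(u + t • d) b - (u + t • d) a| ^ p)
          = fun t => ω a b * |(u b - u a) + t * (d b - d a)| ^ p := by
        funext t
        simp only [Pi.add_apply, Pi.smul_apply, smul_eq_mul]
        ring_nf
      rw [hline]
      simpa only [mul_assoc] using
        (hasDerivAt_abs_add_mul_rpow hp (u b - u a) (d b - d a)).const_mul (ω a b)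
  have hgreen : edgeSum A (fun a b => ω a b * (p * |u b - u a| ^ (p - 2) * (u b - u a) * (d b - d a)))
      = -p * ∑ a, μ a * d a * pLap p A ω μ u a := by
    have hterm (a b : V) : (if A a b then
        ω a b * (p * |u b - u a| ^ (p - 2) * (u b - u a) * (d b - d a)) else 0)
        = p * (G a b * (d b - d a)) := by
      simp only [G]
      split_ifs <;> ring
    simp only [edgeSum, hterm, ← mul_sum, sum_sum_mul_sub_of_antisymm hG]
    simp only [G, mul_assoc, mul_left_comm (μ _), mul_pLap p ω u (hμ _)]
    ring
  have hpot : HasDerivAt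
      (fun t : ℝ => ∑ a, (μ a * k a / 2 * (u + t • d) a ^ 2 + μ a * f a * (u + t • d) a))
      (∑ a, μ a * d a * (k a * u a + f a)) 0 := by
    refine .fun_sum fun a _ => ?_
    have hline := hasDerivAt_add_mul (u a) (d a) 0
    convert ((hline.pow 2).const_mul (μ a * k a / 2)).add (hline.const_mul (μ a * f a)) using 1
    · rfl
    · simp
      ring
  refine ((hedge.div_const p).add hpot).congr_deriv ?_
  rw [hgreen, neg_mul, neg_div, mul_div_cancel_left₀ _ (zero_lt_one.trans hp).ne']
  simp only [mul_sub, sum_sub_distrib]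
  ring

theorem pLap_sub_mul_eq_of_isMin (hp : 1 < p) (hA : Symmetric A)
    (hω : ∀ a b, ω a b = ω b a) (hμ : ∀ a, μ a ≠ 0) {u : V → ℝ}
    (hu : ∀ v, pEnergy p A ω μ k f u ≤ pEnergy p A ω μ k f v) (i : V) :
    pLap p A ω μ u i - k i * u i = f i := by
  classical
  have hmin : IsLocalMin (fun t : ℝ => pEnergy p A ω μ k f (u + t • Pi.single i 1)) 0 :=
    Eventually.of_forall fun t => by simpa using hu _
  have hcrit := hmin.hasDerivAt_eq_zero (hasDerivAt_pEnergy_add_smul hp hA hω hμ u _)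
  simp only [Pi.single_apply, mul_ite, mul_one, mul_zero, ite_mul, zero_mul, sum_ite_eq',
    mem_univ, ↓reduceIte, mul_eq_zero, hμ i, false_or] at hcrit
  linarith

end Energy

theorem stmt8_general {V : Type*} [Fintype V] (p : ℝ) (hp : 1 < p)
    (A : V → V → Prop) [DecidableRel A] (hA : Symmetric A)
    (ω : V → V → ℝ) (hωsymm : ∀ i j, ω i j = ω j i) (hωpos : ∀ i j, A i j → 0 < ω i j)
    (μ : V → ℝ) (hμ : ∀ i, 0 < μ i)
    (k : V → ℝ) (hk : ∀ i, 0 < k i) (f : V → ℝ) :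
    ∃ u : V → ℝ, ∀ i, pLap p A ω μ u i - k i * u i = f i := by
  have hp0 : 0 < p := zero_lt_one.trans hp
  obtain ⟨u, hu⟩ := (continuous_pEnergy hp0).exists_forall_le
    (tendsto_pEnergy_cocompact_atTop hp0 (fun a b h => (hωpos a b h).le) hμ hk)
  exact ⟨u, pLap_sub_mul_eq_of_isMin hp hA hωsymm (fun a => (hμ a).ne') hu⟩

/-- `L = Δ_p - k` is surjective when `k > 0`. -/
theorem stmt8 {V : Type*} [Fintype V] [Nonempty V] (p : ℝ) (hp : 1 < p)
    (A : V → V → Prop) [DecidableRel A] (hA : Symmetric A)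
    (ω : V → V → ℝ) (hωsymm : ∀ i j, ω i j = ω j i) (hωpos : ∀ i j, A i j → 0 < ω i j)
    (μ : V → ℝ) (hμ : ∀ i, 0 < μ i)
    (hconn : ∀ i j : V, Relation.ReflTransGen A i j) (k : V → ℝ) (hk : ∀ i, 0 < k i) (f : V → ℝ) :
    ∃ u : V → ℝ, ∀ i, pLap p A ω μ u i - k i * u i = f i :=
  stmt8_general p hp A hA ω hωsymm hωpos μ hμ k hk f
end

section
/- If u : V → ℝ solves Δ_p u = -h e^u on V with h : V → ℝ not identically zero, then h changes sign (takes both positive and negative values) and Σ_i μ_i h_i < 0. -/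
open Finset Real

/-!
Write `Δ_p u` as a divergence of the antisymmetric flux
`F_ij = ω_ij |u_j - u_i|^{p-2} (u_j - u_i)`. Summation by parts gives
`Σ_i μ_i f_i (Δ_p u)_i = -½ Σ_{i∼j} F_ij (f_j - f_i)`.
With `f = 1` this says `Σ_i μ_i h_i e^{u_i} = 0`, so `h ≢ 0` must take a positive value.
With `f = e^{-u}` it says `Σ_i μ_i h_i = ½ Σ_{i∼j} F_ij (e^{-u_j} - e^{-u_i})`, and every term
is `≤ 0` (negative as soon as `u_i ≠ u_j`) because `F_ij` has the sign of `u_j - u_i`.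
If `u` is constant along every edge then `Δ_p u = 0`, forcing `h = 0`; so the sum is negative.
-/

section EdgeSum

variable {V : Type*} [Fintype V] {A : V → V → Prop} [DecidableRel A]

theorem edgeSum_neg {g : V → V → ℝ} (hg : ∀ i j, A i j → g i j ≤ 0) {i j : V} (hij : A i j)
    (hgij : g i j < 0) : edgeSum A g < 0 := by
  have hsum : ∑ i, ∑ j, (if A i j then g i j else 0) < 0 := by
    refine sum_neg' (fun k _ => sum_nonpos fun l _ => ?_) ⟨i, mem_univ i, ?_⟩
    · split_ifs with hkl
      exacts [hg k l hkl, le_rfl]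
    · refine sum_neg' (fun l _ => ?_) ⟨j, mem_univ j, by simpa [hij] using hgij⟩
      split_ifs with hil
      exacts [hg i l hil, le_rfl]
  unfold edgeSum
  linarith

theorem sum_mul_sum_adj_eq_neg_edgeSum (hA : Symmetric A) {E : V → V → ℝ}
    (hE : ∀ i j, E j i = -E i j) (f : V → ℝ) :
    ∑ i, f i * ∑ j, (if A i j then E i j else 0) = -edgeSum A (fun i j => E i j * (f j - f i)) := by
  have hswap : ∑ i, ∑ j, (if A i j then E i j * f i else 0)
      = ∑ i, ∑ j, (if A i j then -(E i j * f j) else 0) := by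
    rw [sum_comm]
    refine sum_congr rfl fun i _ => sum_congr rfl fun j _ => ?_
    have hji : A j i ↔ A i j := ⟨fun h => hA h, fun h => hA h⟩
    simp only [hji]
    split_ifs
    · rw [hE]; ring
    · rfl
  have hlhs : ∑ i, f i * ∑ j, (if A i j then E i j else 0)
      = ∑ i, ∑ j, (if A i j then E i j * f i else 0) := by
    refine sum_congr rfl fun i _ => ?_
    rw [mul_sum]
    exact sum_congr rfl fun j _ => by split_ifs <;> ring
  have hedge : ∑ i, ∑ j, (if A i j then E i j * (f j - f i) else 0)
      = -∑ i, ∑ j, (if A i j then -(E i j * f j) else 0)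
        - ∑ i, ∑ j, (if A i j then E i j * f i else 0) := by
    rw [← sum_neg_distrib, ← sum_sub_distrib]
    refine sum_congr rfl fun i _ => ?_
    rw [← sum_neg_distrib, ← sum_sub_distrib]
    exact sum_congr rfl fun j _ => by split_ifs <;> ring
  unfold edgeSum
  rw [hlhs, hedge, ← hswap]
  ring

end EdgeSum

section PFlux

variable {V : Type*} (p : ℝ) (ω : V → V → ℝ) (u : V → ℝ)

noncomputable def pFlux (i j : V) : ℝ :=
  ω i j * |u j - u i| ^ (p - 2) * (u j - u i)

variable {p ω u}

theorem pFlux_swap (hω : ∀ i j, ω i j = ω j i) (i j : V) :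
    pFlux p ω u j i = -pFlux p ω u i j := by
  rw [pFlux, pFlux, hω j i, abs_sub_comm]
  ring

theorem pFlux_eq_zero {i j : V} (hij : u i = u j) : pFlux p ω u i j = 0 := by
  simp [pFlux, hij]

theorem pFlux_mul_sub_neg {g : ℝ → ℝ} (hg : StrictAnti g) {i j : V} (hω : 0 < ω i j)
    (hij : u i ≠ u j) : pFlux p ω u i j * (g (u j) - g (u i)) < 0 := by
  have hc : 0 < ω i j * |u j - u i| ^ (p - 2) :=
    mul_pos hω (rpow_pos_of_pos (abs_pos.2 (sub_ne_zero.2 hij.symm)) _)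
  have hsign : (u j - u i) * (g (u j) - g (u i)) < 0 := by
    rcases hij.lt_or_gt with hlt | hgt
    · exact mul_neg_of_pos_of_neg (sub_pos.2 hlt) (sub_neg.2 (hg hlt))
    · exact mul_neg_of_neg_of_pos (sub_neg.2 hgt) (sub_pos.2 (hg hgt))
  calc pFlux p ω u i j * (g (u j) - g (u i))
      = (ω i j * |u j - u i| ^ (p - 2)) * ((u j - u i) * (g (u j) - g (u i))) := by
        unfold pFlux; ring
    _ < 0 := mul_neg_of_pos_of_neg hc hsign

theorem pFlux_mul_sub_nonpos {g : ℝ → ℝ} (hg : StrictAnti g) {i j : V} (hω : 0 < ω i j) :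
    pFlux p ω u i j * (g (u j) - g (u i)) ≤ 0 := by
  rcases eq_or_ne (u i) (u j) with hij | hij
  · simp [pFlux_eq_zero hij]
  · exact (pFlux_mul_sub_neg hg hω hij).le

end PFlux

section PLap

variable {V : Type*} [Fintype V] {p : ℝ} {A : V → V → Prop} [DecidableRel A]
  {ω : V → V → ℝ} {μ : V → ℝ}

theorem pLap_eq_sum_pFlux (u : V → ℝ) (i : V) :
    pLap p A ω μ u i = (1 / μ i) * ∑ j, if A i j then pFlux p ω u i j else 0 :=
  rfl

theorem pLap_eq_zero_of_adj {u : V → ℝ} (hu : ∀ i j, A i j → u i = u j) (i : V) :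
    pLap p A ω μ u i = 0 := by
  rw [pLap_eq_sum_pFlux, sum_eq_zero fun j _ => ?_, mul_zero]
  split_ifs with hij
  exacts [pFlux_eq_zero (hu i j hij), rfl]

theorem sum_mul_pLap (hA : Symmetric A) (hω : ∀ i j, ω i j = ω j i) (hμ : ∀ i, μ i ≠ 0)
    (u f : V → ℝ) :
    ∑ i, μ i * f i * pLap p A ω μ u i
      = -edgeSum A (fun i j => pFlux p ω u i j * (f j - f i)) := by
  rw [← sum_mul_sum_adj_eq_neg_edgeSum hA (pFlux_swap hω) f]
  refine sum_congr rfl fun i _ => ?_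
  rw [pLap_eq_sum_pFlux]
  field_simp [hμ i]

end PLap

theorem exists_pos_of_sum_mul_eq_zero {ι : Type*} [Fintype ι] {w h : ι → ℝ}
    (hw : ∀ i, 0 < w i) (hsum : ∑ i, w i * h i = 0) (hne : ∃ i, h i ≠ 0) : ∃ i, 0 < h i := by
  by_contra! hnonpos
  have hterm : ∀ i ∈ univ, w i * h i ≤ 0 := fun i _ =>
    mul_nonpos_of_nonneg_of_nonpos (hw i).le (hnonpos i)
  obtain ⟨i, hi⟩ := hne
  have hzero := (sum_eq_zero_iff_of_nonpos hterm).1 hsum i (mem_univ i)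
  exact hi ((mul_eq_zero.1 hzero).resolve_left (hw i).ne')

theorem stmt12_general {V : Type*} [Fintype V] (p : ℝ)
    (A : V → V → Prop) [DecidableRel A] (hA : Symmetric A)
    (ω : V → V → ℝ) (hωsymm : ∀ i j, ω i j = ω j i) (hωpos : ∀ i j, A i j → 0 < ω i j)
    (μ : V → ℝ) (hμ : ∀ i, 0 < μ i)
    (h : V → ℝ) (hne : ∃ i, h i ≠ 0) (u : V → ℝ)
    (hu : ∀ i, pLap p A ω μ u i = - h i * Real.exp (u i)) :
    (∃ i, 0 < h i) ∧ (∃ i, h i < 0) ∧ ∑ i, μ i * h i < 0 := by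
  have green := sum_mul_pLap (p := p) hA hωsymm (fun i => (hμ i).ne') u
  simp only [hu] at green
  have hbalance : ∑ i, (μ i * exp (u i)) * h i = 0 := by
    have := green 1
    simp only [Pi.one_apply, sub_self, mul_zero, edgeSum, ite_self, sum_const_zero,
      neg_zero] at this
    rw [← neg_eq_zero, ← this, ← sum_neg_distrib]
    exact sum_congr rfl fun i _ => by ring
  have hmean : ∑ i, μ i * h i
      = edgeSum A (fun i j => pFlux p ω u i j * (exp (-u j) - exp (-u i))) := by
    rw [← neg_inj, ← green fun i => exp (-u i), ← sum_neg_distrib]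
    refine sum_congr rfl fun i _ => ?_
    rw [exp_neg]
    field_simp
  have hanti : StrictAnti fun x => exp (-x) := fun x y hxy => exp_lt_exp.2 (neg_lt_neg hxy)
  have hneg : ∑ i, μ i * h i < 0 := by
    obtain ⟨i, j, hij, huij⟩ : ∃ i j, A i j ∧ u i ≠ u j := by
      by_contra! hconst
      obtain ⟨i, hi⟩ := hne
      have := hu i
      rw [pLap_eq_zero_of_adj hconst] at this
      exact hi (by simpa [exp_ne_zero] using this)
    rw [hmean]
    exact edgeSum_neg (fun i j hij => pFlux_mul_sub_nonpos hanti (hωpos i j hij)) hij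
      (pFlux_mul_sub_neg hanti (hωpos i j hij) huij)
  refine ⟨exists_pos_of_sum_mul_eq_zero (fun i => mul_pos (hμ i) (exp_pos _)) hbalance hne,
    ?_, hneg⟩
  obtain ⟨i, -, hi⟩ := exists_lt_of_sum_lt (hneg.trans_eq sum_const_zero.symm)
  exact ⟨i, neg_of_mul_neg_right hi (hμ i).le⟩

/-- necessary conditions for solvability of `Δ_p u = -h e^u` with `h ≢ 0`. -/
theorem stmt12 {V : Type*} [Fintype V] [Nonempty V] (p : ℝ) (hp : 1 < p)
    (A : V → V → Prop) [DecidableRel A] (hA : Symmetric A)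
    (ω : V → V → ℝ) (hωsymm : ∀ i j, ω i j = ω j i) (hωpos : ∀ i j, A i j → 0 < ω i j)
    (μ : V → ℝ) (hμ : ∀ i, 0 < μ i)
    (hconn : ∀ i j : V, Relation.ReflTransGen A i j) (h : V → ℝ) (hne : ∃ i, h i ≠ 0) (u : V → ℝ)
    (hu : ∀ i, pLap p A ω μ u i = - h i * Real.exp (u i)) :
    (∃ i, 0 < h i) ∧ (∃ i, h i < 0) ∧ ∑ i, μ i * h i < 0 :=
  stmt12_general p A hA ω hωsymm hωpos μ hμ h hne u hu
end

section
/- Let h : V → ℝ be not identically zero, changing sign, with μ-average h̄ < 0. Then there exists u : V → ℝ such that Δ_p u = -h e^u on V. -/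
open Finset Real

/-!
Minimize the `p`-energy `E(u) = Σ_{i∼j} ω_{ij} |u_j - u_i|^p` on the constraint set
`{u | Σ_i μ_i h_i e^{u_i} = 0}`, which is nonempty because `h` changes sign. Both `E` and the
constraint are invariant under adding constants, and on a connected graph the sublevel sets of `E`
normalized by `u i₀ = 0` are bounded, so a minimizer exists. A Lagrange multiplier and Green's
formula `Σ_i μ_i v_i Δ_p u_i = -Σ_{i∼j} ω_{ij} |∇u|^{p-2} ∇u ∇v` give `Δ_p u = κ h e^u`. Testing
with `v = e^{-u}` gives `κ Σ μ h ≥ 0`, hence `κ ≤ 0` since `h̄ < 0`; and `κ = 0` would force `E(u) = 0`,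
so `u` constant, contradicting the constraint. Then `u + log (-κ)` is a solution.
-/

namespace WeightedGraph

variable {V : Type*} [Fintype V] {A : V → V → Prop} [DecidableRel A] {ω : V → V → ℝ}
  {μ : V → ℝ} {p : ℝ}

theorem edgeSum_nonpos {g : V → V → ℝ} (hg : ∀ i j, A i j → g i j ≤ 0) : edgeSum A g ≤ 0 :=
  mul_nonpos_of_nonneg_of_nonpos (by norm_num) <| sum_nonpos fun i _ => sum_nonpos fun j _ => by
    split_ifs with hij
    exacts [hg i j hij, le_rfl]

theorem half_le_edgeSum {g : V → V → ℝ} (hg : ∀ i j, A i j → 0 ≤ g i j) {b c : V}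
    (hbc : A b c) : g b c / 2 ≤ edgeSum A g := by
  have hterm : ∀ i j, 0 ≤ if A i j then g i j else 0 := fun i j => by
    split_ifs with hij
    exacts [hg i j hij, le_rfl]
  have : g b c ≤ ∑ i, ∑ j, if A i j then g i j else 0 :=
    calc g b c = if A b c then g b c else 0 := (if_pos hbc).symm
      _ ≤ ∑ j, if A b j then g b j else 0 :=
        single_le_sum (fun j _ => hterm b j) (mem_univ c)
      _ ≤ _ := single_le_sum (f := fun i => ∑ j, if A i j then g i j else 0)
        (fun i _ => sum_nonneg fun j _ => hterm i j) (mem_univ b)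
  rw [edgeSum]
  linarith

/-- Summation by parts on the edges (discrete Green formula). -/
theorem edgeSum_mul_sub_of_antisymm (hA : Symmetric A) {t : V → V → ℝ}
    (ht : ∀ i j, t j i = -t i j) (v : V → ℝ) :
    edgeSum A (fun i j => t i j * (v j - v i)) =
      -∑ i, v i * ∑ j, if A i j then t i j else 0 := by
  have hswap : (∑ i, ∑ j, if A i j then t i j * v j else 0) =
      -∑ i, ∑ j, if A i j then t i j * v i else 0 := by
    rw [sum_comm, ← sum_neg_distrib]
    refine sum_congr rfl fun i _ => ?_
    rw [← sum_neg_distrib]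
    refine sum_congr rfl fun j _ => ?_
    rw [if_congr ⟨fun h => hA h, fun h => hA h⟩ rfl rfl, ht]
    split_ifs <;> ring
  have hsplit : ∀ i j, (if A i j then t i j * (v j - v i) else 0) =
      (if A i j then t i j * v j else 0) - if A i j then t i j * v i else 0 := fun i j => by
    split_ifs <;> ring
  have hcollect : ∑ i, v i * (∑ j, if A i j then t i j else 0) =
      ∑ i, ∑ j, if A i j then t i j * v i else 0 := by
    simp only [mul_comm (v _), sum_mul, ite_mul, zero_mul]
  simp only [edgeSum, hsplit, sum_sub_distrib, hswap, hcollect]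
  ring

theorem sum_mul_pLap (hA : Symmetric A) (hω : ∀ i j, ω i j = ω j i) (hμ : ∀ i, μ i ≠ 0)
    (u v : V → ℝ) :
    ∑ i, μ i * v i * pLap p A ω μ u i =
      -edgeSum A fun i j => ω i j * |u j - u i| ^ (p - 2) * (u j - u i) * (v j - v i) := by
  rw [edgeSum_mul_sub_of_antisymm hA
    (t := fun i j => ω i j * |u j - u i| ^ (p - 2) * (u j - u i)) (fun i j => ?_), neg_neg]
  · refine sum_congr rfl fun i _ => ?_
    rw [pLap]
    field_simp [hμ i]
  · rw [hω, abs_sub_comm]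
    ring

theorem sub_mul_exp_neg_sub_exp_neg_nonpos (a b : ℝ) : (b - a) * (exp (-b) - exp (-a)) ≤ 0 := by
  rcases le_total a b with hab | hab
  · exact mul_nonpos_of_nonneg_of_nonpos (sub_nonneg.2 hab)
      (sub_nonpos.2 (exp_le_exp.2 (neg_le_neg hab)))
  · exact mul_nonpos_of_nonpos_of_nonneg (sub_nonpos.2 hab)
      (sub_nonneg.2 (exp_le_exp.2 (neg_le_neg hab)))

theorem sum_mul_exp_neg_mul_pLap_nonneg (hA : Symmetric A) (hω : ∀ i j, ω i j = ω j i)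
    (hω₀ : ∀ i j, A i j → 0 ≤ ω i j) (hμ : ∀ i, μ i ≠ 0) (u : V → ℝ) :
    0 ≤ ∑ i, μ i * exp (-u i) * pLap p A ω μ u i := by
  rw [sum_mul_pLap hA hω hμ, neg_nonneg]
  refine edgeSum_nonpos fun i j hij => ?_
  rw [mul_assoc]
  exact mul_nonpos_of_nonneg_of_nonpos
    (mul_nonneg (hω₀ i j hij) (rpow_nonneg (abs_nonneg _) _))
    (sub_mul_exp_neg_sub_exp_neg_nonpos _ _)

theorem pLap_add_const (u : V → ℝ) (c : ℝ) :
    pLap p A ω μ (u + fun _ => c) = pLap p A ω μ u := by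
  unfold pLap
  simp only [Pi.add_apply, add_sub_add_right_eq_sub]

noncomputable def energy (p : ℝ) (A : V → V → Prop) [DecidableRel A] (ω : V → V → ℝ)
    (u : V → ℝ) : ℝ :=
  edgeSum A fun i j => ω i j * |u j - u i| ^ p

theorem energy_add_const (u : V → ℝ) (c : ℝ) :
    energy p A ω (u + fun _ => c) = energy p A ω u := by
  simp only [energy, Pi.add_apply, add_sub_add_right_eq_sub]

theorem energy_eq_neg_sum_mul_pLap (hp : p ≠ 0) (hA : Symmetric A) (hω : ∀ i j, ω i j = ω j i)
    (hμ : ∀ i, μ i ≠ 0) (u : V → ℝ) :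
    energy p A ω u = -∑ i, μ i * u i * pLap p A ω μ u i := by
  rw [sum_mul_pLap hA hω hμ, neg_neg, energy]
  have hpow (x : ℝ) : |x| ^ p = |x| ^ (p - 2) * x * x := by
    rw [mul_assoc, ← sq, ← sq_abs, ← rpow_natCast, Nat.cast_ofNat,
      ← rpow_add' (abs_nonneg _) (by simpa using hp), sub_add_cancel]
  congr 1
  funext i j
  rw [hpow]
  ring

theorem half_le_energy (hω : ∀ i j, A i j → 0 < ω i j) (u : V → ℝ) {b c : V} (hbc : A b c) :
    ω b c * |u c - u b| ^ p / 2 ≤ energy p A ω u :=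
  half_le_edgeSum (g := fun i j => ω i j * |u j - u i| ^ p)
    (fun i j hij => mul_nonneg (hω i j hij).le (rpow_nonneg (abs_nonneg _) p)) hbc

theorem eq_of_energy_eq_zero (hp : p ≠ 0) (hω : ∀ i j, A i j → 0 < ω i j)
    (hconn : ∀ i j : V, Relation.ReflTransGen A i j) {u : V → ℝ} (hu : energy p A ω u = 0)
    (i j : V) : u j = u i := by
  induction hconn i j with
  | refl => rfl
  | @tail b c _ hbc ih =>
    have hterm : ω b c * |u c - u b| ^ p = 0 :=
      le_antisymm (by linarith [half_le_energy (p := p) hω u hbc])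
        (mul_nonneg (hω b c hbc).le (rpow_nonneg (abs_nonneg _) p))
    rw [mul_eq_zero, or_iff_right (hω b c hbc).ne', rpow_eq_zero (abs_nonneg _) hp,
      abs_eq_zero, sub_eq_zero] at hterm
    rw [hterm, ih]

theorem abs_sub_le_of_energy_le (hp : 0 < p) (hω : ∀ i j, A i j → 0 < ω i j) {M : ℝ}
    {u : V → ℝ} (hu : energy p A ω u ≤ M) {b c : V} (hbc : A b c) :
    |u c - u b| ≤ (2 * M / ω b c) ^ p⁻¹ := by
  have hpow : |u c - u b| ^ p ≤ 2 * M / ω b c := by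
    rw [le_div_iff₀ (hω b c hbc)]
    linarith [half_le_energy (p := p) hω u hbc]
  calc |u c - u b| = (|u c - u b| ^ p) ^ p⁻¹ := (rpow_rpow_inv (abs_nonneg _) hp.ne').symm
    _ ≤ (2 * M / ω b c) ^ p⁻¹ :=
      rpow_le_rpow (rpow_nonneg (abs_nonneg _) p) hpow (inv_nonneg.2 hp.le)

theorem isBounded_energy_sublevel (hp : 0 < p) (hω : ∀ i j, A i j → 0 < ω i j)
    (hconn : ∀ i j : V, Relation.ReflTransGen A i j) (i₀ : V) (M : ℝ) :
    Bornology.IsBounded {u : V → ℝ | u i₀ = 0 ∧ energy p A ω u ≤ M} := by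
  have hpath : ∀ j, ∃ C, ∀ u : V → ℝ, energy p A ω u ≤ M → |u j - u i₀| ≤ C := by
    intro j
    induction hconn i₀ j with
    | refl => exact ⟨0, fun u _ => by simp⟩
    | @tail b c _ hbc ih =>
      obtain ⟨C, hC⟩ := ih
      refine ⟨(2 * M / ω b c) ^ p⁻¹ + C, fun u hu => ?_⟩
      calc |u c - u i₀| ≤ |u c - u b| + |u b - u i₀| := abs_sub_le _ _ _
        _ ≤ _ := add_le_add (abs_sub_le_of_energy_le hp hω hu hbc) (hC u hu)
  refine Bornology.forall_isBounded_image_eval_iff.1 fun j => ?_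
  obtain ⟨C, hC⟩ := hpath j
  refine (Metric.isBounded_closedBall (x := (0 : ℝ)) (r := C)).subset ?_
  rintro _ ⟨u, ⟨hu₀, hu⟩, rfl⟩
  simpa [hu₀] using hC u hu

theorem hasLineDerivAt_energy (hp : 1 < p) (u v : V → ℝ) :
    HasLineDerivAt ℝ (energy p A ω)
      (p * edgeSum A fun i j => ω i j * |u j - u i| ^ (p - 2) * (u j - u i) * (v j - v i)) u v := by
  have hline : ∀ i j, HasDerivAt (fun t : ℝ => (u + t • v) j - (u + t • v) i) (v j - v i) 0 :=
    fun i j => (((hasDerivAt_id (0 : ℝ)).mul_const (v j)).const_add (u j)).sub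
      (((hasDerivAt_id (0 : ℝ)).mul_const (v i)).const_add (u i)) |>.congr_deriv (by ring)
  have hterm : ∀ i j, HasDerivAt
      (fun t : ℝ => if A i j then ω i j * |(u + t • v) j - (u + t • v) i| ^ p else 0)
      (p * if A i j then ω i j * |u j - u i| ^ (p - 2) * (u j - u i) * (v j - v i) else 0) 0 := by
    intro i j
    by_cases hij : A i j
    · simp only [hij, if_true]
      have := ((hasDerivAt_abs_rpow (u j - u i) hp).comp_of_eq 0 (hline i j) (by simp)).const_mul
        (ω i j)
      exact this.congr_deriv (by ring)
    · simpa only [hij, if_false, mul_zero] using hasDerivAt_const (0 : ℝ) (0 : ℝ)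
  have := (HasDerivAt.fun_sum (u := univ) fun i _ =>
    HasDerivAt.fun_sum (u := univ) fun j _ => hterm i j).const_mul
    (1 / 2 : ℝ)
  simp only [← mul_sum] at this
  unfold HasLineDerivAt energy edgeSum
  exact this.congr_deriv (by ring)

theorem contDiff_energy (hp : 1 < p) : ContDiff ℝ 1 (energy p A ω) := by
  refine contDiff_const.mul <| ContDiff.sum fun i _ => ContDiff.sum fun j _ => ?_
  by_cases hij : A i j
  · simpa only [hij, if_true, Real.norm_eq_abs] using
      contDiff_const.mul (((contDiff_apply ℝ ℝ j).sub (contDiff_apply ℝ ℝ i)).norm_rpow hp)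
  · simpa only [hij, if_false] using contDiff_const

theorem fderiv_energy_apply (hp : 1 < p) (hA : Symmetric A) (hω : ∀ i j, ω i j = ω j i)
    (hμ : ∀ i, μ i ≠ 0) (u v : V → ℝ) :
    fderiv ℝ (energy p A ω) u v = -p * ∑ i, μ i * v i * pLap p A ω μ u i := by
  rw [← ((contDiff_energy hp).differentiable one_ne_zero u).lineDeriv_eq_fderiv,
    (hasLineDerivAt_energy hp u v).lineDeriv, sum_mul_pLap hA hω hμ]
  ring

noncomputable def expIntegral (μ h u : V → ℝ) : ℝ := ∑ i, μ i * h i * exp (u i)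

theorem expIntegral_add_const (μ h u : V → ℝ) (c : ℝ) :
    expIntegral μ h (u + fun _ => c) = exp c * expIntegral μ h u := by
  simp only [expIntegral, Pi.add_apply, exp_add, mul_sum]
  exact sum_congr rfl fun i _ => by ring

theorem contDiff_expIntegral (μ h : V → ℝ) : ContDiff ℝ 1 (expIntegral μ h) := by
  unfold expIntegral; fun_prop

theorem hasLineDerivAt_expIntegral (μ h u v : V → ℝ) :
    HasLineDerivAt ℝ (expIntegral μ h) (∑ i, μ i * h i * exp (u i) * v i) u v := by
  unfold HasLineDerivAt expIntegral
  refine HasDerivAt.fun_sum fun i _ => ?_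
  have := (((hasDerivAt_id (0 : ℝ)).smul_const (v i)).const_add (u i)).exp.const_mul (μ i * h i)
  simpa [mul_assoc] using this

theorem fderiv_expIntegral_apply (μ h u v : V → ℝ) :
    fderiv ℝ (expIntegral μ h) u v = ∑ i, μ i * h i * exp (u i) * v i := by
  rw [← ((contDiff_expIntegral μ h).differentiable one_ne_zero u).lineDeriv_eq_fderiv,
    (hasLineDerivAt_expIntegral μ h u v).lineDeriv]

theorem exists_expIntegral_eq_zero (hμ : ∀ i, 0 < μ i) {h : V → ℝ} (hpos : ∃ i, 0 < h i)
    (hneg : ∃ i, h i < 0) : ∃ u, expIntegral μ h u = 0 := by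
  classical
  set P := ∑ i ∈ univ.filter (fun i => 0 < h i), μ i * h i
  set N := ∑ i ∈ univ.filter (fun i => ¬0 < h i), μ i * h i
  have hP : 0 < P := by
    obtain ⟨i, hi⟩ := hpos
    refine sum_pos' (fun j hj => (mul_pos (hμ j) (mem_filter.1 hj).2).le) ⟨i, ?_, ?_⟩
    exacts [mem_filter.2 ⟨mem_univ i, hi⟩, mul_pos (hμ i) hi]
  have hN : N < 0 := by
    obtain ⟨i, hi⟩ := hneg
    refine sum_neg' (fun j hj => mul_nonpos_of_nonneg_of_nonpos (hμ j).le
      (not_lt.1 (mem_filter.1 hj).2)) ⟨i, ?_, ?_⟩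
    exacts [mem_filter.2 ⟨mem_univ i, hi.not_gt⟩, mul_neg_of_pos_of_neg (hμ i) hi]
  refine ⟨fun i => if 0 < h i then log (-N / P) else 0, ?_⟩
  have hsplit : expIntegral μ h (fun i => if 0 < h i then log (-N / P) else 0) =
      exp (log (-N / P)) * P + N := by
    simp only [expIntegral, apply_ite exp, exp_zero, mul_ite, mul_one, sum_ite, P, N, mul_sum]
    congr 1
    exact sum_congr rfl fun i _ => by ring
  rw [hsplit, exp_log (div_pos (neg_pos.2 hN) hP), div_mul_cancel₀ _ hP.ne']
  ring

theorem exists_isMinOn_energy [Nonempty V] (hp : 1 < p) (hω : ∀ i j, A i j → 0 < ω i j)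
    (hconn : ∀ i j : V, Relation.ReflTransGen A i j) (hμ : ∀ i, 0 < μ i) {h : V → ℝ}
    (hpos : ∃ i, 0 < h i) (hneg : ∃ i, h i < 0) :
    ∃ u, expIntegral μ h u = 0 ∧ IsMinOn (energy p A ω) {v | expIntegral μ h v = 0} u := by
  obtain ⟨u₁, hu₁⟩ := exists_expIntegral_eq_zero hμ hpos hneg
  let i₀ := Classical.arbitrary V
  let K := {v | expIntegral μ h v = 0} ∩ {v | v i₀ = 0 ∧ energy p A ω v ≤ energy p A ω u₁}
  have hE := (contDiff_energy (A := A) (ω := ω) hp).continuous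
  have hK : IsCompact K := Metric.isCompact_of_isClosed_isBounded
    ((isClosed_eq (contDiff_expIntegral μ h).continuous continuous_const).inter
      ((isClosed_eq (continuous_apply i₀) continuous_const).inter
        (isClosed_le hE continuous_const)))
    ((isBounded_energy_sublevel (zero_lt_one.trans hp) hω hconn i₀ _).subset fun _ hv => hv.2)
  have hmem : ∀ v, expIntegral μ h v = 0 → energy p A ω v ≤ energy p A ω u₁ →
      (v + fun _ => -v i₀) ∈ K := fun v hv hvE =>
    ⟨by simp [expIntegral_add_const, hv], by simp, by rwa [energy_add_const]⟩
  obtain ⟨u₀, hu₀K, hmin⟩ := hK.exists_isMinOn ⟨_, hmem u₁ hu₁ le_rfl⟩ hE.continuousOn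
  refine ⟨u₀, hu₀K.1, isMinOn_iff.2 fun v hv => ?_⟩
  rcases le_total (energy p A ω v) (energy p A ω u₁) with hle | hle
  · simpa [energy_add_const] using isMinOn_iff.1 hmin _ (hmem v hv hle)
  · exact (isMinOn_iff.1 hmin _ (hmem u₁ hu₁ le_rfl)).trans (by rwa [energy_add_const])

theorem exists_pLap_eq_mul_of_isMinOn (hp : 1 < p) (hA : Symmetric A)
    (hω : ∀ i j, ω i j = ω j i) (hμ : ∀ i, μ i ≠ 0) {h : V → ℝ} (hh : ∃ i, h i ≠ 0)
    {u : V → ℝ} (hmin : IsMinOn (energy p A ω) {v | expIntegral μ h v = expIntegral μ h u} u) :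
    ∃ κ : ℝ, ∀ i, pLap p A ω μ u i = κ * h i * exp (u i) := by
  classical
  have hstrict {f : (V → ℝ) → ℝ} (hf : ContDiff ℝ 1 f) : HasStrictFDerivAt f (fderiv ℝ f u) u :=
    hf.contDiffAt.hasStrictFDerivAt one_ne_zero
  obtain ⟨a, b, hab, hlag⟩ :=
    hmin.isExtr.localize.exists_multipliers_of_hasStrictFDerivAt_1d
      (hstrict (contDiff_expIntegral μ h)) (hstrict (contDiff_energy hp))
  have hk : ∀ k, a * (μ k * h k * exp (u k)) = b * p * (μ k * pLap p A ω μ u k) := by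
    intro k
    have := congr($hlag (Pi.single k 1))
    simp [fderiv_energy_apply hp hA hω hμ, fderiv_expIntegral_apply, Pi.single_apply] at this
    linarith
  have hb : b ≠ 0 := by
    rintro rfl
    obtain ⟨k, hk0⟩ := hh
    have : a = 0 := by simpa [hμ k, hk0, (exp_pos _).ne'] using hk k
    exact hab (by simp [this])
  refine ⟨a / (b * p), fun i => ?_⟩
  field_simp
  exact mul_left_cancel₀ (hμ i) (by linear_combination -hk i)

theorem neg_of_pLap_eq_mul [Nonempty V] (hp : p ≠ 0) (hA : Symmetric A)
    (hω : ∀ i j, ω i j = ω j i) (hωpos : ∀ i j, A i j → 0 < ω i j)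
    (hconn : ∀ i j : V, Relation.ReflTransGen A i j) (hμ : ∀ i, μ i ≠ 0) {h : V → ℝ}
    (hh : ∑ i, μ i * h i < 0) {u : V → ℝ} (hu : expIntegral μ h u = 0) {κ : ℝ}
    (hκ : ∀ i, pLap p A ω μ u i = κ * h i * exp (u i)) : κ < 0 := by
  have hκ_nonpos : κ ≤ 0 := by
    refine nonpos_of_mul_nonneg_left ?_ hh
    calc 0 ≤ ∑ i, μ i * exp (-u i) * pLap p A ω μ u i :=
          sum_mul_exp_neg_mul_pLap_nonneg hA hω (fun i j hij => (hωpos i j hij).le) hμ u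
      _ = κ * ∑ i, μ i * h i := by
          rw [mul_sum]
          refine sum_congr rfl fun i _ => ?_
          rw [hκ, exp_neg]
          field_simp
  refine hκ_nonpos.lt_of_ne fun hκ0 => ?_
  have hE : energy p A ω u = 0 := by
    simp [energy_eq_neg_sum_mul_pLap hp hA hω hμ, hκ, hκ0]
  let i₀ := Classical.arbitrary V
  have hconst := eq_of_energy_eq_zero hp hωpos hconn hE i₀
  have : expIntegral μ h u = exp (u i₀) * ∑ i, μ i * h i := by
    simp only [expIntegral, hconst, mul_sum]
    exact sum_congr rfl fun i _ => by ring
  rw [hu] at this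
  exact (mul_neg_of_pos_of_neg (exp_pos _) hh).ne' this

end WeightedGraph

open WeightedGraph in
/-- if `h ≢ 0` changes sign and `h̄ < 0`, then `Δ_p u = -h e^u` is solvable. -/
theorem stmt13 {V : Type*} [Fintype V] [Nonempty V] (p : ℝ) (hp : 1 < p)
    (A : V → V → Prop) [DecidableRel A] (hA : Symmetric A)
    (ω : V → V → ℝ) (hωsymm : ∀ i j, ω i j = ω j i) (hωpos : ∀ i j, A i j → 0 < ω i j)
    (μ : V → ℝ) (hμ : ∀ i, 0 < μ i)
    (hconn : ∀ i j : V, Relation.ReflTransGen A i j) (h : V → ℝ) (hne : ∃ i, h i ≠ 0)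
    (hpos : ∃ i, 0 < h i) (hneg : ∃ i, h i < 0)
    (hbar : (∑ i, μ i * h i) / (∑ i, μ i) < 0) :
    ∃ u : V → ℝ, ∀ i, pLap p A ω μ u i = - h i * Real.exp (u i) := by
  have hμ₀ : ∀ i, μ i ≠ 0 := fun i => (hμ i).ne'
  have hsum : ∑ i, μ i * h i < 0 :=
    neg_of_div_neg_left hbar (sum_nonneg fun i _ => (hμ i).le)
  obtain ⟨u, hu, hmin⟩ := exists_isMinOn_energy hp hωpos hconn hμ hpos hneg
  obtain ⟨κ, hκ⟩ := exists_pLap_eq_mul_of_isMinOn hp hA hωsymm hμ₀ hne (hu ▸ hmin)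
  have hκ_neg := neg_of_pLap_eq_mul (by linarith) hA hωsymm hωpos hconn hμ₀ hsum hu hκ
  refine ⟨u + fun _ => log (-κ), fun i => ?_⟩
  rw [pLap_add_const, hκ, Pi.add_apply, exp_add, exp_log (neg_pos.2 hκ_neg)]
  ring
end
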